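/- For integers k ≥ 3 and ℓ ≥ 2, the graph G(k,ℓ) — obtained from ℓ disjoint copies of K_{k+1} minus an edge arranged cyclically, adding for each i an edge between a vertex of copy i and a vertex of copy i+1 so that the result is k-regular — has clustering coefficient exactly 1 − 6/(k(k+1)). -/

import Mathlib

namespace ClusterCoeff

/-- The degree of a vertex. -/
noncomputable def deg {V : Type*} (G : SimpleGraph V) (u : V) : ℕ :=
  Nat.card (G.neighborSet u)

/-- The number of edges of the subgraph induced by the neighborhood of `u`. -/
noncomputable def nbrE {V : Type*} (G : SimpleGraph V) (u : V) : ℕ :=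
  Nat.card {p : G.neighborSet u × G.neighborSet u // G.Adj p.1 p.2} / 2

/-- The clustering coefficient of the vertex `u`. -/
noncomputable def localCC {V : Type*} (G : SimpleGraph V) (u : V) : ℝ :=
  if 2 ≤ deg G u then (nbrE G u : ℝ) / ((deg G u).choose 2) else 0

/-- The clustering coefficient of the graph `G`. -/
noncomputable def cc {V : Type*} [Fintype V] (G : SimpleGraph V) : ℝ :=
  (∑ u, localCC G u) / (Fintype.card V)

/-- The complete graph on `n` vertices minus the edge between vertices `0` and `1`. -/
def Kminus (n : ℕ) [NeZero n] : SimpleGraph (Fin n) where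
  Adj a b := a ≠ b ∧ ¬((a = 0 ∧ b = 1) ∨ (a = 1 ∧ b = 0))
  symm := by
    constructor
    intro a b h
    obtain ⟨h1, h2⟩ := h
    exact ⟨h1.symm, by tauto⟩
  loopless := by
    constructor
    intro a h
    exact h.1 rfl

/-- The graph obtained from `G` by adding the edge `uv`. -/
def addEdge {V : Type*} (G : SimpleGraph V) (u v : V) : SimpleGraph V where
  Adj a b := a ≠ b ∧ (G.Adj a b ∨ (a = u ∧ b = v) ∨ (a = v ∧ b = u))
  symm := by
    constructor
    intro a b h
    obtain ⟨h1, h2⟩ := h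
    refine ⟨h1.symm, ?_⟩
    rcases h2 with h | h | h
    · exact Or.inl h.symm
    · exact Or.inr (Or.inr ⟨h.2, h.1⟩)
    · exact Or.inr (Or.inl ⟨h.2, h.1⟩)
  loopless := by
    constructor
    intro a h
    exact h.1 rfl

/-- The graph obtained from `G` by deleting the edge `uv`. -/
def delEdge {V : Type*} (G : SimpleGraph V) (u v : V) : SimpleGraph V where
  Adj a b := G.Adj a b ∧ ¬((a = u ∧ b = v) ∨ (a = v ∧ b = u))
  symm := by
    constructor
    intro a b h
    exact ⟨h.1.symm, by tauto⟩
  loopless := by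
    constructor
    intro a h
    exact G.irrefl h.1

/-- The modified connected caveman graph `G(k,ℓ)`: `ℓ` copies of `K_{k+1} - e` arranged
cyclically, with one edge between consecutive copies, chosen so that the graph is
`k`-regular (the two degree-deficient vertices `0` and `1` of each copy receive
the connecting edges). -/
def cave (k ℓ : ℕ) : SimpleGraph (ZMod ℓ × Fin (k + 1)) where
  Adj v w := v ≠ w ∧
    ((v.1 = w.1 ∧ v.2 ≠ w.2 ∧ ¬((v.2 = 0 ∧ w.2 = 1) ∨ (v.2 = 1 ∧ w.2 = 0))) ∨
     (w.1 = v.1 + 1 ∧ v.2 = 0 ∧ w.2 = 1) ∨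
     (v.1 = w.1 + 1 ∧ w.2 = 0 ∧ v.2 = 1))
  symm := by
    constructor
    intro v w h
    obtain ⟨h0, h⟩ := h
    refine ⟨h0.symm, ?_⟩
    rcases h with ⟨h1, h2, h3⟩ | ⟨h1, h2, h3⟩ | ⟨h1, h2, h3⟩
    · exact Or.inl ⟨h1.symm, h2.symm, by tauto⟩
    · exact Or.inr (Or.inr ⟨h1, h2, h3⟩)
    · exact Or.inr (Or.inl ⟨h1, h2, h3⟩)
  loopless := by
    constructor
    intro v h
    exact h.1 rfl

section Aux

open Finset

lemma cave_adj {k ℓ : ℕ} {v w : ZMod ℓ × Fin (k+1)} :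
    (cave k ℓ).Adj v w ↔ v ≠ w ∧
    ((v.1 = w.1 ∧ v.2 ≠ w.2 ∧ ¬((v.2 = 0 ∧ w.2 = 1) ∨ (v.2 = 1 ∧ w.2 = 0))) ∨
     (w.1 = v.1 + 1 ∧ v.2 = 0 ∧ w.2 = 1) ∨
     (v.1 = w.1 + 1 ∧ w.2 = 0 ∧ v.2 = 1)) := Iff.rfl

instance caveAdjDecidable (k ℓ : ℕ) : DecidableRel (cave k ℓ).Adj := fun _ _ =>
  decidable_of_iff _ cave_adj.symm

lemma deg_eq_card {V : Type*} [Fintype V] (G : SimpleGraph V) [DecidableRel G.Adj] (u : V) :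
    deg G u = (G.neighborFinset u).card := by
  unfold deg
  rw [Nat.card_eq_fintype_card, SimpleGraph.card_neighborSet_eq_degree]
  rfl

lemma nbrE_eq_filter {V : Type*} [Fintype V] [DecidableEq V] (G : SimpleGraph V)
    [DecidableRel G.Adj] (u : V) :
    nbrE G u =
      (((G.neighborFinset u) ×ˢ (G.neighborFinset u)).filter fun p => G.Adj p.1 p.2).card / 2 := by
  unfold nbrE
  congr 1
  rw [← Nat.card_eq_finsetCard]
  refine Nat.card_congr ⟨fun x => ⟨(x.1.1.1, x.1.2.1), ?_⟩, fun x => ⟨(⟨x.1.1, ?_⟩, ⟨x.1.2, ?_⟩), ?_⟩, ?_, ?_⟩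
  · simp only [Finset.mem_filter, Finset.mem_product, SimpleGraph.mem_neighborFinset]
    exact ⟨⟨x.1.1.2, x.1.2.2⟩, x.2⟩
  · have := x.2
    simp only [Finset.mem_filter, Finset.mem_product, SimpleGraph.mem_neighborFinset] at this
    exact this.1.1
  · have := x.2
    simp only [Finset.mem_filter, Finset.mem_product, SimpleGraph.mem_neighborFinset] at this
    exact this.1.2
  · have := x.2
    simp only [Finset.mem_filter, Finset.mem_product, SimpleGraph.mem_neighborFinset] at this
    exact this.2
  · intro x; rfl
  · intro x; rfl

def Tset (k : ℕ) : Finset (Fin (k+1)) := (Finset.univ.erase 0).erase 1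

lemma mem_Tset {k : ℕ} {m : Fin (k+1)} : m ∈ Tset k ↔ m ≠ 1 ∧ m ≠ 0 := by
  simp [Tset]

lemma fin_zero_ne_one {k : ℕ} (hk : 3 ≤ k) : (0 : Fin (k+1)) ≠ 1 := by
  intro h
  have h1 : ((1 : Fin (k+1)) : ℕ) = 1 := by
    rw [Fin.val_one']
    exact Nat.mod_eq_of_lt (by omega)
  rw [← h] at h1
  simp at h1

lemma fin_one_ne_zero {k : ℕ} (hk : 3 ≤ k) : (1 : Fin (k+1)) ≠ 0 :=
  fun h => fin_zero_ne_one hk h.symm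

lemma zmod_one_ne_zero {ℓ : ℕ} (hl : 2 ≤ ℓ) : (1 : ZMod ℓ) ≠ 0 := by
  haveI : Fact (1 < ℓ) := ⟨hl⟩
  exact one_ne_zero

lemma add_one_ne {ℓ : ℕ} (hl : 2 ≤ ℓ) (i : ZMod ℓ) : i + 1 ≠ i := by
  intro h
  apply zmod_one_ne_zero hl
  have h' : i + 1 = i + 0 := by rw [add_zero]; exact h
  exact add_left_cancel h'

lemma sub_one_ne {ℓ : ℕ} (hl : 2 ≤ ℓ) (i : ZMod ℓ) : i - 1 ≠ i := by
  intro h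
  apply zmod_one_ne_zero hl
  have h' : i - 1 = i - 0 := by rw [sub_zero]; exact h
  exact sub_right_injective h'

lemma Tset_card {k : ℕ} (hk : 3 ≤ k) : (Tset k).card = k - 1 := by
  have h1 : (1 : Fin (k+1)) ∈ Finset.univ.erase 0 :=
    Finset.mem_erase.2 ⟨fin_one_ne_zero hk, Finset.mem_univ _⟩
  rw [Tset, Finset.card_erase_of_mem h1,
    Finset.card_erase_of_mem (Finset.mem_univ _), Finset.card_univ, Fintype.card_fin]
  omega

section Caves

variable {k ℓ : ℕ} [NeZero ℓ]

lemma nf_big (i : ZMod ℓ) (j : Fin (k+1)) (hj0 : j ≠ 0) (hj1 : j ≠ 1) :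
    (cave k ℓ).neighborFinset (i, j) = {i} ×ˢ Finset.univ.erase j := by
  ext ⟨i', m⟩
  simp only [SimpleGraph.mem_neighborFinset, cave_adj, Finset.mem_product, Finset.mem_singleton,
    Finset.mem_erase, Finset.mem_univ, and_true, ne_eq, Prod.mk.injEq, not_and]
  constructor
  · rintro ⟨hne, ⟨h1, h2, _⟩ | ⟨_, h2, _⟩ | ⟨_, _, h3⟩⟩
    · exact ⟨h1.symm, fun hmj => h2 hmj.symm⟩
    · exact absurd h2 hj0
    · exact absurd h3 hj1
  · rintro ⟨rfl, hmj⟩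
    refine ⟨fun _ hjm => hmj hjm.symm, Or.inl ⟨rfl, fun hjm => hmj hjm.symm, ?_⟩⟩
    rintro (⟨hj0', _⟩ | ⟨hj1', _⟩)
    · exact hj0 hj0'
    · exact hj1 hj1'

lemma nf_zero (hk : 3 ≤ k) (i : ZMod ℓ) :
    (cave k ℓ).neighborFinset (i, (0 : Fin (k+1))) =
      insert (i + 1, (1 : Fin (k+1))) ({i} ×ˢ Tset k) := by
  ext ⟨i', m⟩
  simp only [SimpleGraph.mem_neighborFinset, cave_adj, Finset.mem_insert, Finset.mem_product,
    Finset.mem_singleton, mem_Tset, ne_eq, Prod.mk.injEq]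
  constructor
  · rintro ⟨hne, ⟨h1, h2, h3⟩ | ⟨h1, _, h3⟩ | ⟨_, _, h3⟩⟩
    · right
      refine ⟨h1.symm, ?_, fun h => h2 h.symm⟩
      intro hm1; exact h3 (by tauto)
    · left; exact ⟨h1, h3⟩
    · exact absurd h3 (fin_zero_ne_one hk)
  · rintro (⟨rfl, rfl⟩ | ⟨rfl, hm1, hm0⟩)
    · refine ⟨?_, Or.inr (Or.inl (by tauto))⟩
      rintro ⟨-, h01⟩
      exact fin_zero_ne_one hk h01
    · have hm0' : ¬((0 : Fin (k+1)) = m) := fun h => hm0 h.symm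
      have h01 : ¬((0 : Fin (k+1)) = 1) := fin_zero_ne_one hk
      refine ⟨?_, Or.inl (by tauto)⟩
      rintro ⟨-, h0m⟩
      exact hm0 h0m.symm

lemma nf_one (hk : 3 ≤ k) (i : ZMod ℓ) :
    (cave k ℓ).neighborFinset (i, (1 : Fin (k+1))) =
      insert (i - 1, (0 : Fin (k+1))) ({i} ×ˢ Tset k) := by
  ext ⟨i', m⟩
  simp only [SimpleGraph.mem_neighborFinset, cave_adj, Finset.mem_insert, Finset.mem_product,
    Finset.mem_singleton, mem_Tset, ne_eq, Prod.mk.injEq]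
  constructor
  · rintro ⟨hne, ⟨h1, h2, h3⟩ | ⟨_, h2, _⟩ | ⟨h1, h2, _⟩⟩
    · right
      refine ⟨h1.symm, fun h => h2 h.symm, ?_⟩
      intro hm0; exact h3 (by tauto)
    · exact absurd h2 (fin_one_ne_zero hk)
    · left
      constructor
      · rw [eq_sub_iff_add_eq]; exact h1.symm
      · exact h2
  · rintro (⟨rfl, rfl⟩ | ⟨rfl, hm1, hm0⟩)
    · have hii : i = i - 1 + 1 := by rw [sub_add_cancel]
      refine ⟨?_, Or.inr (Or.inr (by tauto))⟩
      rintro ⟨-, h10⟩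
      exact fin_one_ne_zero hk h10
    · have hm1' : ¬((1 : Fin (k+1)) = m) := fun h => hm1 h.symm
      have h10 : ¬((1 : Fin (k+1)) = 0) := fin_one_ne_zero hk
      refine ⟨?_, Or.inl (by tauto)⟩
      rintro ⟨-, h1m⟩
      exact hm1 h1m.symm

lemma deg_cave (hk : 3 ≤ k) (u : ZMod ℓ × Fin (k+1)) : deg (cave k ℓ) u = k := by
  obtain ⟨i, j⟩ := u
  by_cases hj0 : j = 0
  · subst hj0
    rw [deg_eq_card, nf_zero hk i, Finset.card_insert_of_notMem (by simp [mem_Tset]),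
      Finset.card_product, Finset.card_singleton, Tset_card hk, one_mul]
    omega
  by_cases hj1 : j = 1
  · subst hj1
    rw [deg_eq_card, nf_one hk i, Finset.card_insert_of_notMem (by simp [mem_Tset]),
      Finset.card_product, Finset.card_singleton, Tset_card hk, one_mul]
    omega
  · rw [deg_eq_card, nf_big i j hj0 hj1, Finset.card_product, Finset.card_singleton,
      Finset.card_erase_of_mem (Finset.mem_univ _), Finset.card_univ, Fintype.card_fin, one_mul]
    omega

lemma filt_zero (hk : 3 ≤ k) (hl : 2 ≤ ℓ) (i : ZMod ℓ) :
    ((insert (i + 1, (1 : Fin (k+1))) ({i} ×ˢ Tset k) ×ˢ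
      insert (i + 1, (1 : Fin (k+1))) ({i} ×ˢ Tset k)).filter
        fun p => (cave k ℓ).Adj p.1 p.2) = ({i} ×ˢ Tset k).offDiag := by
  ext ⟨⟨a1, b1⟩, ⟨a2, b2⟩⟩
  simp only [Finset.mem_filter, Finset.mem_product, Finset.mem_insert, Finset.mem_offDiag,
    Finset.mem_singleton, mem_Tset, cave_adj, ne_eq, Prod.mk.injEq]
  constructor
  · rintro ⟨⟨m1, m2⟩, hne, hadj⟩
    rcases m1 with ⟨rfl, rfl⟩ | ⟨rfl, hb11, hb10⟩
    · rcases m2 with ⟨rfl, rfl⟩ | ⟨rfl, hb21, hb20⟩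
      · exact absurd ⟨rfl, rfl⟩ hne
      · rcases hadj with ⟨h1, -, -⟩ | ⟨-, h2, -⟩ | ⟨-, h2, -⟩
        · exact absurd h1 (add_one_ne hl _)
        · exact absurd h2 (fin_one_ne_zero hk)
        · exact absurd h2 hb20
    · rcases m2 with ⟨rfl, rfl⟩ | ⟨rfl, hb21, hb20⟩
      · rcases hadj with ⟨h1, -, -⟩ | ⟨-, h2, -⟩ | ⟨-, h2, -⟩
        · exact absurd h1.symm (add_one_ne hl _)
        · exact absurd h2 hb10
        · exact absurd h2 (fin_one_ne_zero hk)
      · refine ⟨⟨rfl, hb11, hb10⟩, ⟨rfl, hb21, hb20⟩, hne⟩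
  · rintro ⟨⟨rfl, hb11, hb10⟩, ⟨rfl, hb21, hb20⟩, hne⟩
    refine ⟨⟨Or.inr ⟨rfl, hb11, hb10⟩, Or.inr ⟨rfl, hb21, hb20⟩⟩, hne, Or.inl ⟨rfl, ?_, ?_⟩⟩
    · intro hb
      exact hne ⟨rfl, hb⟩
    · rintro (⟨hb, -⟩ | ⟨hb, -⟩)
      · exact hb10 hb
      · exact hb11 hb

lemma filt_one (hk : 3 ≤ k) (hl : 2 ≤ ℓ) (i : ZMod ℓ) :
    ((insert (i - 1, (0 : Fin (k+1))) ({i} ×ˢ Tset k) ×ˢ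
      insert (i - 1, (0 : Fin (k+1))) ({i} ×ˢ Tset k)).filter
        fun p => (cave k ℓ).Adj p.1 p.2) = ({i} ×ˢ Tset k).offDiag := by
  ext ⟨⟨a1, b1⟩, ⟨a2, b2⟩⟩
  simp only [Finset.mem_filter, Finset.mem_product, Finset.mem_insert, Finset.mem_offDiag,
    Finset.mem_singleton, mem_Tset, cave_adj, ne_eq, Prod.mk.injEq]
  constructor
  · rintro ⟨⟨m1, m2⟩, hne, hadj⟩
    rcases m1 with ⟨rfl, rfl⟩ | ⟨rfl, hb11, hb10⟩
    · rcases m2 with ⟨rfl, rfl⟩ | ⟨rfl, hb21, hb20⟩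
      · exact absurd ⟨rfl, rfl⟩ hne
      · rcases hadj with ⟨h1, -, -⟩ | ⟨-, -, h2⟩ | ⟨-, h2, -⟩
        · exact absurd h1 (sub_one_ne hl _)
        · exact absurd h2 hb21
        · exact absurd h2 hb20
    · rcases m2 with ⟨rfl, rfl⟩ | ⟨rfl, hb21, hb20⟩
      · rcases hadj with ⟨h1, -, -⟩ | ⟨-, h2, -⟩ | ⟨-, -, h2⟩
        · exact absurd h1.symm (sub_one_ne hl _)
        · exact absurd h2 hb10
        · exact absurd h2 hb11
      · refine ⟨⟨rfl, hb11, hb10⟩, ⟨rfl, hb21, hb20⟩, hne⟩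
  · rintro ⟨⟨rfl, hb11, hb10⟩, ⟨rfl, hb21, hb20⟩, hne⟩
    refine ⟨⟨Or.inr ⟨rfl, hb11, hb10⟩, Or.inr ⟨rfl, hb21, hb20⟩⟩, hne, Or.inl ⟨rfl, ?_, ?_⟩⟩
    · intro hb
      exact hne ⟨rfl, hb⟩
    · rintro (⟨hb, -⟩ | ⟨hb, -⟩)
      · exact hb10 hb
      · exact hb11 hb

lemma filt_big (hk : 3 ≤ k) (hl : 2 ≤ ℓ) (i : ZMod ℓ) (j : Fin (k+1))
    (hj0 : j ≠ 0) (hj1 : j ≠ 1) :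
    (((({i} : Finset (ZMod ℓ)) ×ˢ Finset.univ.erase j) ×ˢ
        (({i} : Finset (ZMod ℓ)) ×ˢ Finset.univ.erase j)).filter
        fun p => (cave k ℓ).Adj p.1 p.2)
      = (({i} ×ˢ Finset.univ.erase j).offDiag) \
        {((i, (0 : Fin (k+1))), (i, (1 : Fin (k+1)))), ((i, 1), (i, 0))} := by
  ext ⟨⟨a1, b1⟩, ⟨a2, b2⟩⟩
  simp only [Finset.mem_filter, Finset.mem_product, Finset.mem_singleton, Finset.mem_erase,
    Finset.mem_univ, and_true, Finset.mem_sdiff, Finset.mem_offDiag, Finset.mem_insert,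
    cave_adj, ne_eq, Prod.mk.injEq]
  constructor
  · rintro ⟨⟨⟨rfl, hb1⟩, rfl, hb2⟩, hne, hadj⟩
    rcases hadj with ⟨-, -, h3⟩ | ⟨h1, -, -⟩ | ⟨h1, -, -⟩
    · refine ⟨⟨⟨rfl, hb1⟩, ⟨rfl, hb2⟩, hne⟩, ?_⟩
      rintro (⟨⟨-, hb10⟩, -, hb21⟩ | ⟨⟨-, hb11⟩, -, hb20⟩)
      · exact h3 (Or.inl ⟨hb10, hb21⟩)
      · exact h3 (Or.inr ⟨hb11, hb20⟩)
    · exact absurd h1 (Ne.symm (add_one_ne hl _))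
    · exact absurd h1 (Ne.symm (add_one_ne hl _))
  · rintro ⟨⟨⟨rfl, hb1⟩, ⟨rfl, hb2⟩, hne⟩, hbad⟩
    refine ⟨⟨⟨rfl, hb1⟩, rfl, hb2⟩, hne, Or.inl ⟨rfl, ?_, ?_⟩⟩
    · intro hb
      exact hne ⟨rfl, hb⟩
    · rintro (⟨hb10, hb21⟩ | ⟨hb11, hb20⟩)
      · exact hbad (Or.inl (by tauto))
      · exact hbad (Or.inr (by tauto))

lemma nbrE_zero (hk : 3 ≤ k) (hl : 2 ≤ ℓ) (i : ZMod ℓ) :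
    nbrE (cave k ℓ) (i, (0 : Fin (k+1))) = ((k-1)*(k-1) - (k-1)) / 2 := by
  rw [nbrE_eq_filter, nf_zero hk i, filt_zero hk hl i, Finset.offDiag_card,
    Finset.card_product, Finset.card_singleton, Tset_card hk, one_mul]

lemma nbrE_one (hk : 3 ≤ k) (hl : 2 ≤ ℓ) (i : ZMod ℓ) :
    nbrE (cave k ℓ) (i, (1 : Fin (k+1))) = ((k-1)*(k-1) - (k-1)) / 2 := by
  rw [nbrE_eq_filter, nf_one hk i, filt_one hk hl i, Finset.offDiag_card,
    Finset.card_product, Finset.card_singleton, Tset_card hk, one_mul]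

lemma nbrE_big (hk : 3 ≤ k) (hl : 2 ≤ ℓ) (i : ZMod ℓ) (j : Fin (k+1))
    (hj0 : j ≠ 0) (hj1 : j ≠ 1) :
    nbrE (cave k ℓ) (i, j) = (k*k - k - 2) / 2 := by
  have hsub : ({((i, (0 : Fin (k+1))), (i, (1 : Fin (k+1)))), ((i, 1), (i, 0))} :
        Finset ((ZMod ℓ × Fin (k+1)) × (ZMod ℓ × Fin (k+1))))
      ⊆ (({i} ×ˢ Finset.univ.erase j).offDiag) := by
    intro p hp
    have h0 : (i, (0 : Fin (k+1))) ∈ ({i} : Finset (ZMod ℓ)) ×ˢ Finset.univ.erase j := by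
      rw [Finset.mem_product, Finset.mem_singleton, Finset.mem_erase]
      exact ⟨rfl, fun h => hj0 h.symm, Finset.mem_univ _⟩
    have h1 : (i, (1 : Fin (k+1))) ∈ ({i} : Finset (ZMod ℓ)) ×ˢ Finset.univ.erase j := by
      rw [Finset.mem_product, Finset.mem_singleton, Finset.mem_erase]
      exact ⟨rfl, fun h => hj1 h.symm, Finset.mem_univ _⟩
    rcases Finset.mem_insert.1 hp with rfl | hp'
    · exact Finset.mem_offDiag.2 ⟨h0, h1, fun h =>
        fin_zero_ne_one hk (congrArg Prod.snd h)⟩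
    · rcases Finset.mem_singleton.1 hp' with rfl
      exact Finset.mem_offDiag.2 ⟨h1, h0, fun h =>
        fin_one_ne_zero hk (congrArg Prod.snd h)⟩
  have hbadcard : ({((i, (0 : Fin (k+1))), (i, (1 : Fin (k+1)))), ((i, 1), (i, 0))} :
      Finset ((ZMod ℓ × Fin (k+1)) × (ZMod ℓ × Fin (k+1)))).card = 2 := by
    rw [Finset.card_insert_of_notMem, Finset.card_singleton]
    rw [Finset.mem_singleton]
    intro hmem
    exact fin_zero_ne_one hk (congrArg (fun p => p.1.2) hmem)
  rw [nbrE_eq_filter, nf_big i j hj0 hj1, filt_big hk hl i j hj0 hj1,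
    Finset.card_sdiff_of_subset hsub, hbadcard, Finset.offDiag_card, Finset.card_product,
    Finset.card_singleton, Finset.card_erase_of_mem (Finset.mem_univ _), Finset.card_univ,
    Fintype.card_fin, one_mul]
  simp only [Nat.add_sub_cancel]

lemma nat_sq (n : ℕ) : n * (n - 1) + n = n * n := by
  cases n with
  | zero => simp
  | succ n =>
    simp only [Nat.succ_sub_one]
    ring

lemma localCC_big (hk : 3 ≤ k) (hl : 2 ≤ ℓ) (i : ZMod ℓ) (j : Fin (k+1))
    (hj0 : j ≠ 0) (hj1 : j ≠ 1) :
    localCC (cave k ℓ) (i, j) = ((k:ℝ) * ((k:ℝ)-1) - 2) / ((k:ℝ) * ((k:ℝ)-1)) := by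
  have hev : Even (k * (k - 1)) := by
    have h := Nat.even_mul_succ_self (k - 1)
    rwa [Nat.sub_add_cancel (by omega), mul_comm] at h
  obtain ⟨t, ht⟩ := hev
  have hkk : k * (k - 1) + k = k * k := nat_sq k
  have h1 : (k*k - k - 2)/2 = t - 1 := by omega
  have h2 : k.choose 2 = t := by rw [Nat.choose_two_right]; omega
  have ht3 : 3 ≤ t := by
    have h32 : 3 * 2 ≤ k * (k - 1) := Nat.mul_le_mul hk (by omega)
    omega
  unfold localCC
  rw [if_pos (by rw [deg_cave hk]; omega), deg_cave hk, nbrE_big hk hl i j hj0 hj1,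
    h1, h2]
  have htR : (k:ℝ) * ((k:ℝ) - 1) = 2 * (t:ℝ) := by
    have hc := congrArg (Nat.cast : ℕ → ℝ) ht
    push_cast [Nat.cast_sub (by omega : 1 ≤ k)] at hc
    linarith
  have ht0 : (t:ℝ) ≠ 0 := by
    have : (3:ℝ) ≤ (t:ℝ) := by exact_mod_cast ht3
    linarith
  rw [Nat.cast_sub (by omega : 1 ≤ t), htR]
  push_cast
  field_simp

lemma localCC_small_aux (hk : 3 ≤ k) (e : ℕ)
    (he : e = ((k-1)*(k-1) - (k-1)) / 2) :
    (e : ℝ) / (k.choose 2 : ℝ) = (((k:ℝ)-1) * ((k:ℝ)-2)) / ((k:ℝ) * ((k:ℝ)-1)) := by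
  have hev : Even (k * (k - 1)) := by
    have h := Nat.even_mul_succ_self (k - 1)
    rwa [Nat.sub_add_cancel (by omega), mul_comm] at h
  obtain ⟨t, ht⟩ := hev
  have hkk : k * (k - 1) + k = k * k := nat_sq k
  have h2 : k.choose 2 = t := by rw [Nat.choose_two_right]; omega
  have ht3 : 3 ≤ t := by
    have h32 : 3 * 2 ≤ k * (k - 1) := Nat.mul_le_mul hk (by omega)
    omega
  have hev' : Even ((k-1) * (k-2)) := by
    have h := Nat.even_mul_succ_self (k - 2)
    rwa [show k - 2 + 1 = k - 1 by omega, mul_comm] at h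
  obtain ⟨s, hs⟩ := hev'
  have hsq : (k-1) * (k-2) + (k-1) = (k-1) * (k-1) := by
    have h := nat_sq (k-1)
    rwa [show k - 1 - 1 = k - 2 by omega] at h
  have h1 : e = s := by omega
  have htR : (k:ℝ) * ((k:ℝ) - 1) = 2 * (t:ℝ) := by
    have hc := congrArg (Nat.cast : ℕ → ℝ) ht
    push_cast [Nat.cast_sub (by omega : 1 ≤ k)] at hc
    linarith
  have hsR : ((k:ℝ) - 1) * ((k:ℝ) - 2) = 2 * (s:ℝ) := by
    have hc := congrArg (Nat.cast : ℕ → ℝ) hs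
    push_cast [Nat.cast_sub (by omega : 1 ≤ k), Nat.cast_sub (by omega : 2 ≤ k)] at hc
    linarith
  have ht0 : (t:ℝ) ≠ 0 := by
    have : (3:ℝ) ≤ (t:ℝ) := by exact_mod_cast ht3
    linarith
  rw [h1, h2, htR, hsR]
  field_simp

lemma localCC_zero (hk : 3 ≤ k) (hl : 2 ≤ ℓ) (i : ZMod ℓ) :
    localCC (cave k ℓ) (i, (0 : Fin (k+1))) =
      (((k:ℝ)-1) * ((k:ℝ)-2)) / ((k:ℝ) * ((k:ℝ)-1)) := by
  unfold localCC
  rw [if_pos (by rw [deg_cave hk]; omega), deg_cave hk]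
  exact localCC_small_aux hk _ (nbrE_zero hk hl i)

lemma localCC_one (hk : 3 ≤ k) (hl : 2 ≤ ℓ) (i : ZMod ℓ) :
    localCC (cave k ℓ) (i, (1 : Fin (k+1))) =
      (((k:ℝ)-1) * ((k:ℝ)-2)) / ((k:ℝ) * ((k:ℝ)-1)) := by
  unfold localCC
  rw [if_pos (by rw [deg_cave hk]; omega), deg_cave hk]
  exact localCC_small_aux hk _ (nbrE_one hk hl i)

end Caves

end Aux


/-- For `k ≥ 3` and `ℓ ≥ 2`, the modified connected caveman graph `G(k,ℓ)`
has clustering coefficient exactly `1 - 6/(k(k+1))`. -/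
theorem caveman_clustering (k ℓ : ℕ) [NeZero ℓ] (hk : 3 ≤ k) (hl : 2 ≤ ℓ) :
    cc (cave k ℓ) = 1 - 6 / ((k : ℝ) * (k + 1)) := by
  classical
  set S : ℝ := (((k:ℝ)-1) * ((k:ℝ)-2)) / ((k:ℝ) * ((k:ℝ)-1)) with hS
  set B : ℝ := ((k:ℝ) * ((k:ℝ)-1) - 2) / ((k:ℝ) * ((k:ℝ)-1)) with hB
  have hval : ∀ u : ZMod ℓ × Fin (k+1), localCC (cave k ℓ) u =
      if u.2 = 0 ∨ u.2 = 1 then S else B := by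
    rintro ⟨i, j⟩
    by_cases h0 : j = 0
    · subst h0; rw [if_pos (Or.inl rfl)]; exact localCC_zero hk hl i
    · by_cases h1 : j = 1
      · subst h1; rw [if_pos (Or.inr rfl)]; exact localCC_one hk hl i
      · rw [if_neg (by tauto)]; exact localCC_big hk hl i j h0 h1
  have hc1 : (Finset.univ.filter fun j : Fin (k+1) => j = 0 ∨ j = 1).card = 2 := by
    have hf1 : (Finset.univ.filter fun j : Fin (k+1) => j = 0 ∨ j = 1) = {0, 1} := by
      ext m; simp
    rw [hf1, Finset.card_insert_of_notMem (by simp [fin_zero_ne_one hk]),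
      Finset.card_singleton]
  have hc2 : (Finset.univ.filter fun j : Fin (k+1) => ¬(j = 0 ∨ j = 1)).card = k - 1 := by
    have h := Finset.card_filter_add_card_filter_not
      (s := (Finset.univ : Finset (Fin (k+1)))) (p := fun j : Fin (k+1) => j = 0 ∨ j = 1)
    rw [Finset.card_univ, Fintype.card_fin] at h
    omega
  have hinner : ∀ i : ZMod ℓ,
      (∑ j : Fin (k+1), if (i, j).2 = 0 ∨ (i, j).2 = 1 then S else B)
        = 2*S + ((k:ℝ)-1)*B := by
    intro i
    show (∑ j : Fin (k+1), if j = 0 ∨ j = 1 then S else B) = 2*S + ((k:ℝ)-1)*B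
    rw [Finset.sum_ite, Finset.sum_const, Finset.sum_const, hc1, hc2,
      nsmul_eq_mul, nsmul_eq_mul]
    push_cast [Nat.cast_sub (by omega : 1 ≤ k)]
    ring
  have hsum : ∑ u : ZMod ℓ × Fin (k+1), localCC (cave k ℓ) u
      = (ℓ:ℝ) * (2*S + ((k:ℝ)-1)*B) := by
    rw [Finset.sum_congr rfl (fun u _ => hval u), Fintype.sum_prod_type]
    rw [Finset.sum_congr rfl (fun i _ => hinner i), Finset.sum_const, Finset.card_univ,
      ZMod.card, nsmul_eq_mul]
  have hcard : ((Fintype.card (ZMod ℓ × Fin (k+1)) : ℕ) : ℝ) = (ℓ:ℝ) * ((k:ℝ)+1) := by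
    rw [Fintype.card_prod, ZMod.card, Fintype.card_fin]
    push_cast
    ring
  unfold cc
  rw [hsum, hcard, hS, hB]
  have hk3 : (3:ℝ) ≤ (k:ℝ) := by exact_mod_cast hk
  have hl2 : (2:ℝ) ≤ (ℓ:ℝ) := by exact_mod_cast hl
  have h1 : (k:ℝ) ≠ 0 := by linarith
  have h2 : (k:ℝ) - 1 ≠ 0 := by intro h; nlinarith
  have h3 : (k:ℝ) + 1 ≠ 0 := by linarith
  have h4 : (ℓ:ℝ) ≠ 0 := by linarith
  field_simp
  ring


end ClusterCoeff
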